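/- The wedge of two discs minus the wedge point is disconnected: if W = (D² ⊔ D²)/(center ∼ center) and p is the identified center, then W ∖ {p} has exactly two connected components, whereas for any point q in the open disc, D² ∖ {q} restricted to a small punctured disc neighborhood is connected. -/

import Mathlib

open Metric

/-- The closed unit disc in the plane. -/
def Disc : Set (EuclideanSpace ℝ (Fin 2)) := closedBall 0 1

/-- The center of the disc. -/
noncomputable def discCenter : Disc := ⟨0, Metric.mem_closedBall_self zero_le_one⟩

/-- The identification of the two centers of `D² ⊔ D²`. -/
noncomputable def wedgeRel : (Disc ⊕ Disc) → (Disc ⊕ Disc) → Prop :=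
  fun a b => a = Sum.inl discCenter ∧ b = Sum.inr discCenter

/-- The wedge of two closed discs at their centers. -/
noncomputable def Wedge : Type := Quot wedgeRel

noncomputable instance : TopologicalSpace Wedge := instTopologicalSpaceQuot

/-- The identified center point of the wedge. -/
noncomputable def wedgePoint : Wedge := Quot.mk wedgeRel (Sum.inl discCenter)

/-!
Off the two centers the quotient map `D² ⊔ D² → W` is injective, so it carries the two punctured
discs onto disjoint open sets covering `W ∖ {p}`. A punctured disc is connected, being the image
of `(0, 1] × S¹` under `(r, v) ↦ r • v`; hence these two sets are exactly the components of
`W ∖ {p}`. The same polar-coordinate argument shows that punctured balls in the plane are connected.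
-/

open Set Function

section PuncturedBalls

variable {E : Type*} [NormedAddCommGroup E] [NormedSpace ℝ E]

theorem isConnected_preimage_norm_sub (h : 1 < Module.rank ℝ E) (q : E) {s : Set ℝ}
    (hs : IsConnected s) (hpos : s ⊆ Ioi 0) : IsConnected ((‖· - q‖) ⁻¹' s) := by
  have himage : (fun p : ℝ × E => q + p.1 • p.2) '' (s ×ˢ sphere 0 1) = (‖· - q‖) ⁻¹' s := by
    ext x
    constructor
    · rintro ⟨⟨r, v⟩, ⟨hr, hv⟩, rfl⟩
      have hr0 : 0 < r := hpos hr
      rw [mem_sphere_zero_iff_norm] at hv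
      simpa [norm_smul, hv, abs_of_pos hr0] using hr
    · intro hx
      have hx0 : ‖x - q‖ ≠ 0 := (hpos hx).ne'
      refine ⟨(‖x - q‖, ‖x - q‖⁻¹ • (x - q)), ⟨hx, ?_⟩, ?_⟩
      · rw [mem_sphere_zero_iff_norm, norm_smul, norm_inv, norm_norm, inv_mul_cancel₀ hx0]
      · simp [smul_smul, mul_inv_cancel₀ hx0]
  rw [← himage]
  exact (hs.prod (isConnected_sphere h 0 zero_le_one)).image _ (by fun_prop)

theorem isConnected_ball_diff_singleton (h : 1 < Module.rank ℝ E) (q : E) {r : ℝ}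
    (hr : 0 < r) : IsConnected (ball q r \ {q}) := by
  convert isConnected_preimage_norm_sub h q (isConnected_Ioo hr) Ioo_subset_Ioi_self using 1
  ext x
  simp [dist_eq_norm, sub_ne_zero, and_comm]

theorem isConnected_closedBall_diff_singleton (h : 1 < Module.rank ℝ E) (q : E) {r : ℝ}
    (hr : 0 < r) : IsConnected (closedBall q r \ {q}) := by
  convert isConnected_preimage_norm_sub h q (isConnected_Ioc hr) Ioc_subset_Ioi_self using 1
  ext x
  simp [dist_eq_norm, sub_ne_zero, and_comm]

end PuncturedBalls

section ConnectedComponents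

variable {α ι : Type*} [TopologicalSpace α]

theorem IsConnected.preimage_coe {s t : Set α} (ht : IsConnected t) (hts : t ⊆ s) :
    IsConnected (((↑) : s → α) ⁻¹' t) := by
  have himage : ((↑) : s → α) '' ((↑) ⁻¹' t) = t := by
    rw [Subtype.image_preimage_coe, inter_eq_right.mpr hts]
  rw [← himage] at ht
  exact ⟨image_nonempty.mp ht.1, Topology.IsInducing.subtypeVal.isPreconnected_image.mp ht.2⟩

theorem isClopen_of_pairwise_disjoint_of_iUnion_eq_univ {U : ι → Set α}
    (hopen : ∀ i, IsOpen (U i)) (hdisj : Pairwise (Disjoint on U)) (hunion : ⋃ i, U i = univ)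
    (i : ι) : IsClopen (U i) := by
  have hcompl : (U i)ᶜ = ⋃ (j) (_ : j ≠ i), U j := by
    ext x
    obtain ⟨k, hk⟩ := mem_iUnion.mp (hunion ▸ mem_univ x)
    simp only [mem_compl_iff, mem_iUnion]
    exact ⟨fun hx => ⟨k, fun hki => hx (hki ▸ hk), hk⟩,
      fun ⟨j, hji, hj⟩ hi => (hdisj hji).le_bot ⟨hj, hi⟩⟩
  refine ⟨?_, hopen i⟩
  rw [← isOpen_compl_iff, hcompl]
  exact isOpen_biUnion fun j _ => hopen j

theorem nonempty_connectedComponents_equiv_of_isOpen {s : Set α} {U : ι → Set α}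
    (hopen : ∀ i, IsOpen (U i)) (hdisj : Pairwise (Disjoint on U)) (hunion : ⋃ i, U i = s)
    (hconn : ∀ i, IsConnected (U i)) : Nonempty (ConnectedComponents s ≃ ι) := by
  set V : ι → Set s := fun i => (↑) ⁻¹' U i
  have hVunion : ⋃ i, V i = univ := by
    simp only [V, ← preimage_iUnion, hunion, Subtype.coe_preimage_self]
  have hVdisj : Pairwise (Disjoint on V) := fun i j hij => (hdisj hij).preimage _
  have hVclopen : ∀ i, IsClopen (V i) := isClopen_of_pairwise_disjoint_of_iUnion_eq_univ
    (fun i => (hopen i).preimage continuous_subtype_val) hVdisj hVunion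
  exact ⟨ConnectedComponents.equivOfIsClopenOfIsConnected hVclopen hVdisj hVunion
    fun i => (hconn i).preimage_coe (hunion ▸ subset_iUnion U i)⟩

theorem nonempty_connectedComponents_equiv_fin_two {A B : Set α} (hA : IsOpen A)
    (hB : IsOpen B) (hAB : Disjoint A B) (hAc : IsConnected A) (hBc : IsConnected B) :
    Nonempty (ConnectedComponents (A ∪ B : Set α) ≃ Fin 2) := by
  obtain ⟨e⟩ := nonempty_connectedComponents_equiv_of_isOpen (U := fun b => cond b A B)
    (Bool.forall_bool.2 ⟨hB, hA⟩) (pairwise_disjoint_on_bool.2 hAB) union_eq_iUnion.symm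
    (Bool.forall_bool.2 ⟨hBc, hAc⟩)
  exact ⟨e.trans finTwoEquiv.symm⟩

end ConnectedComponents

theorem one_lt_rank_euclideanSpace_fin {n : ℕ} (hn : 1 < n) :
    1 < Module.rank ℝ (EuclideanSpace ℝ (Fin n)) := by
  rw [← Module.finrank_eq_rank, finrank_euclideanSpace_fin]
  exact_mod_cast hn

theorem isConnected_compl_discCenter : IsConnected ({discCenter}ᶜ : Set Disc) := by
  have hcompl : ({discCenter}ᶜ : Set Disc) =
      ((↑) : Disc → EuclideanSpace ℝ (Fin 2)) ⁻¹' (closedBall 0 1 \ {0}) := by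
    ext x
    have hx : ‖(x : EuclideanSpace ℝ (Fin 2))‖ ≤ 1 := mem_closedBall_zero_iff.mp x.2
    simp [discCenter, Subtype.ext_iff, hx]
  rw [hcompl]
  exact (isConnected_closedBall_diff_singleton (one_lt_rank_euclideanSpace_fin one_lt_two) 0
    one_pos).preimage_coe sdiff_subset

def wedgeCenters : Set (Disc ⊕ Disc) := {Sum.inl discCenter, Sum.inr discCenter}

theorem compl_wedgeCenters :
    wedgeCentersᶜ = Sum.inl '' {discCenter}ᶜ ∪ Sum.inr '' {discCenter}ᶜ := by
  ext (d | d) <;> simp [wedgeCenters]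

theorem wedge_mk_eq_mk_iff {a b : Disc ⊕ Disc} :
    Quot.mk wedgeRel a = Quot.mk wedgeRel b ↔ a = b ∨ a ∈ wedgeCenters ∧ b ∈ wedgeCenters := by
  have hequiv : Equivalence fun a b : Disc ⊕ Disc =>
      a = b ∨ a ∈ wedgeCenters ∧ b ∈ wedgeCenters :=
    ⟨fun _ => .inl rfl, fun | .inl h => .inl h.symm | .inr h => .inr h.symm,
      fun | .inl rfl, h => h | h, .inl rfl => h | .inr h, .inr h' => .inr ⟨h.1, h'.2⟩⟩
  have hcenter : ∀ x ∈ wedgeCenters, Relation.EqvGen wedgeRel x (Sum.inl discCenter) := by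
    rintro x (rfl | rfl)
    · exact .refl _
    · exact .symm _ _ (.rel _ _ ⟨rfl, rfl⟩)
  rw [Quot.eq]
  constructor
  · intro h
    refine hequiv.eqvGen_iff.mp (h.mono fun x y hxy => .inr ⟨?_, ?_⟩)
    · exact hxy.1 ▸ .inl rfl
    · exact hxy.2 ▸ .inr rfl
  · rintro (rfl | ⟨ha, hb⟩)
    · exact .refl _
    · exact (hcenter a ha).trans _ _ _ ((hcenter b hb).symm _ _)

theorem wedge_mk_eq_wedgePoint_iff {a : Disc ⊕ Disc} :
    Quot.mk wedgeRel a = wedgePoint ↔ a ∈ wedgeCenters := by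
  rw [wedgePoint, wedge_mk_eq_mk_iff]
  simp [wedgeCenters]

theorem wedge_mk_image_compl_wedgeCenters :
    Quot.mk wedgeRel '' wedgeCentersᶜ = {w | w ≠ wedgePoint} := by
  have hpreimage : wedgeCentersᶜ = Quot.mk wedgeRel ⁻¹' {w | w ≠ wedgePoint} := by
    ext
    exact (not_congr wedge_mk_eq_wedgePoint_iff).symm
  rw [hpreimage]
  exact image_preimage_eq _ Quot.mk_surjective

theorem wedge_mk_preimage_image {S : Set (Disc ⊕ Disc)} (hS : Disjoint S wedgeCenters) :
    Quot.mk wedgeRel ⁻¹' (Quot.mk wedgeRel '' S) = S := by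
  ext a
  simp only [mem_preimage, mem_image, wedge_mk_eq_mk_iff]
  constructor
  · rintro ⟨b, hb, rfl | ⟨hbC, -⟩⟩
    · exact hb
    · exact absurd hbC (disjoint_left.mp hS hb)
  · exact fun ha => ⟨a, ha, .inl rfl⟩

theorem isOpen_wedge_mk_image {S : Set (Disc ⊕ Disc)} (hopen : IsOpen S)
    (hS : Disjoint S wedgeCenters) : IsOpen (Quot.mk wedgeRel '' S) := by
  rw [← isQuotientMap_quot_mk.isOpen_preimage, wedge_mk_preimage_image hS]
  exact hopen

theorem disjoint_wedge_mk_image {S T : Set (Disc ⊕ Disc)} (hST : Disjoint S T)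
    (hS : Disjoint S wedgeCenters) :
    Disjoint (Quot.mk wedgeRel '' S) (Quot.mk wedgeRel '' T) := by
  rw [disjoint_image_right, wedge_mk_preimage_image hS]
  exact hST

theorem nonempty_connectedComponents_compl_wedgePoint_equiv_fin_two :
    Nonempty (ConnectedComponents {w : Wedge | w ≠ wedgePoint} ≃ Fin 2) := by
  have hL : Disjoint (Sum.inl '' {discCenter}ᶜ) wedgeCenters :=
    subset_compl_iff_disjoint_right.mp (compl_wedgeCenters ▸ subset_union_left)
  have hR : Disjoint (Sum.inr '' {discCenter}ᶜ) wedgeCenters :=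
    subset_compl_iff_disjoint_right.mp (compl_wedgeCenters ▸ subset_union_right)
  rw [← wedge_mk_image_compl_wedgeCenters, compl_wedgeCenters, image_union]
  exact nonempty_connectedComponents_equiv_fin_two
    (isOpen_wedge_mk_image (isOpenMap_inl _ isOpen_compl_singleton) hL)
    (isOpen_wedge_mk_image (isOpenMap_inr _ isOpen_compl_singleton) hR)
    (disjoint_wedge_mk_image (disjoint_image_image fun _ _ _ _ => Sum.inl_ne_inr) hL)
    ((isConnected_compl_discCenter.image _ continuous_inl.continuousOn).image _
      continuous_quot_mk.continuousOn)
    ((isConnected_compl_discCenter.image _ continuous_inr.continuousOn).image _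
      continuous_quot_mk.continuousOn)

/-- Removing the wedge point from the wedge of two discs leaves exactly two
connected components, whereas for any point `q` of the open disc, small
punctured disc neighborhoods of `q` are connected. -/
theorem wedge_minus_point_two_components :
    Nonempty (ConnectedComponents ({w : Wedge | w ≠ wedgePoint}) ≃ Fin 2) ∧
    ∀ q ∈ ball (0 : EuclideanSpace ℝ (Fin 2)) 1, ∃ δ : ℝ, 0 < δ ∧
      ∀ δ' : ℝ, 0 < δ' → δ' ≤ δ →
        IsConnected ((ball q δ' \ {q}) : Set (EuclideanSpace ℝ (Fin 2))) :=
  ⟨nonempty_connectedComponents_compl_wedgePoint_equiv_fin_two, fun q _ =>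
    ⟨1, one_pos, fun _ hδ' _ =>
      isConnected_ball_diff_singleton (one_lt_rank_euclideanSpace_fin one_lt_two) q hδ'⟩⟩
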